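/- With the notation of the two Riccati representations: let A, B, P, Q be continuous on [0, b] as above, W₀ an n × m real matrix, [W₁(x); W₂(x)] = ℰ([[A,Q],[P,B]])(x) · [W₀; 1], and [U₁(x), U₂(x)] = [W₀, 1] · ℱ([[−B,P],[Q,−A]])(x). Then for all x ∈ [0, b], U₂(x) · W₁(x) − U₁(x) · W₂(x) = 0. Consequently, wherever both W₂(x) and U₂(x) are invertible, W₁(x) · W₂(x)⁻¹ = U₂(x)⁻¹ · U₁(x), so the two representations of the Riccati solution agree. -/

import Mathlib

open MeasureTheory Matrix

/- Matrices are equipped with the elementwise sup norm. -/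
attribute [local instance] Matrix.normedAddCommGroup Matrix.normedSpace

/-- Terms of the left integral series: `E_0(x) = 1`, `E_{k+1}(x) = ∫_0^x X(t) * E_k(t) dt`. -/
noncomputable def lterm {ι : Type*} [Fintype ι] [DecidableEq ι]
    (X : ℝ → Matrix ι ι ℝ) : ℕ → ℝ → Matrix ι ι ℝ
  | 0, _ => 1
  | k + 1, x => ∫ t in (0:ℝ)..x, X t * lterm X k t

/-- The left integral series `ℰ(X)(x) = ∑_{k=0}^∞ E_k(x)`. -/
noncomputable def ES {ι : Type*} [Fintype ι] [DecidableEq ι]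
    (X : ℝ → Matrix ι ι ℝ) (x : ℝ) : Matrix ι ι ℝ := ∑' k, lterm X k x

/-- Terms of the right integral series: `F_0(x) = 1`, `F_{k+1}(x) = ∫_0^x F_k(t) * X(t) dt`. -/
noncomputable def rterm {ι : Type*} [Fintype ι] [DecidableEq ι]
    (X : ℝ → Matrix ι ι ℝ) : ℕ → ℝ → Matrix ι ι ℝ
  | 0, _ => 1
  | k + 1, x => ∫ t in (0:ℝ)..x, rterm X k t * X t

/-- The right integral series `ℱ(X)(x) = ∑_{k=0}^∞ F_k(x)`. -/
noncomputable def FS {ι : Type*} [Fintype ι] [DecidableEq ι]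
    (X : ℝ → Matrix ι ι ℝ) (x : ℝ) : Matrix ι ι ℝ := ∑' k, rterm X k x

/-!
With `J = [[0, -1], [1, 0]]` one has `J · [[A, Q], [P, B]] = -[[-B, P], [Q, -A]] · J`, and this
intertwining passes termwise through the left integral series: `J · ℰ(M) = ℰ(-N) · J`. The right
series inverts the left one, `ℱ(N) · ℰ(-N) = 1`: every antidiagonal block of the Cauchy product
has zero derivative and vanishes at `0`. Hence `ℱ(N) · J · ℰ(M) = J`, and multiplying by `[W₀, 1]`
on the left and by `[W₀; 1]` on the right turns `[U₁, U₂] · J · [W₁; W₂] = U₂ W₁ - U₁ W₂` into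
`W₀ - W₀ = 0`.
-/

open Set Topology

namespace Matrix

theorem mul_tsum {ι κ ρ : Type*} [Fintype κ] [Fintype ρ] (K : Matrix ι κ ℝ)
    {f : ℕ → Matrix κ ρ ℝ} (hf : Summable f) : K * ∑' k, f k = ∑' k, K * f k :=
  (mulLeftLinearMap ρ ℝ K).toContinuousLinearMap.map_tsum hf

theorem tsum_mul {ι κ ρ : Type*} [Fintype ι] [Fintype κ] (K : Matrix κ ρ ℝ)
    {f : ℕ → Matrix ι κ ℝ} (hf : Summable f) : (∑' k, f k) * K = ∑' k, f k * K :=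
  (mulRightLinearMap ι ℝ K).toContinuousLinearMap.map_tsum hf

variable {ι κ ρ : Type*} [Fintype ι] [Fintype κ] [Fintype ρ]

/- The sup norm is only a local instance, so instance search cannot see that its topology is
`Matrix.topologicalSpace`; without this, `IntervalIntegrable` is unavailable for matrices. -/
instance : ENormedAddMonoid (Matrix ι κ ℝ) :=
  inferInstanceAs (ENormedAddMonoid (ι → κ → ℝ))

theorem norm_mul_le_card_mul (A : Matrix ι κ ℝ) (B : Matrix κ ρ ℝ) :
    ‖A * B‖ ≤ Fintype.card κ * ‖A‖ * ‖B‖ := by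
  rw [norm_le_iff (by positivity)]
  intro i j
  calc ‖(A * B) i j‖ ≤ ∑ k, ‖A i k * B k j‖ := norm_sum_le _ _
    _ ≤ ∑ _k : κ, ‖A‖ * ‖B‖ := by
        gcongr with k
        rw [norm_mul]
        exact mul_le_mul (norm_entry_le_entrywise_sup_norm A)
          (norm_entry_le_entrywise_sup_norm B) (norm_nonneg _) (norm_nonneg _)
    _ = Fintype.card κ * ‖A‖ * ‖B‖ := by simp [mul_assoc]

theorem norm_one_le [DecidableEq ι] : ‖(1 : Matrix ι ι ℝ)‖ ≤ 1 :=
  (norm_le_iff zero_le_one).2 fun i j => by by_cases h : i = j <;> simp [one_apply, h]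

theorem isBoundedBilinearMap_mul :
    IsBoundedBilinearMap ℝ fun p : Matrix ι κ ℝ × Matrix κ ρ ℝ => p.1 * p.2 where
  add_left := Matrix.add_mul
  smul_left := Matrix.smul_mul
  add_right := Matrix.mul_add
  smul_right c A B := Matrix.mul_smul A c B
  bound := ⟨Fintype.card κ + 1, by positivity, fun A B =>
    (norm_mul_le_card_mul A B).trans (by gcongr; linarith)⟩

theorem mul_intervalIntegral (K : Matrix ι κ ℝ) {f : ℝ → Matrix κ ρ ℝ} {a b : ℝ}
    (hf : IntervalIntegrable f MeasureTheory.volume a b) :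
    K * ∫ t in a..b, f t = ∫ t in a..b, K * f t :=
  ((mulLeftLinearMap ρ ℝ K).toContinuousLinearMap.intervalIntegral_comp_comm hf).symm

theorem intervalIntegral_mul (K : Matrix κ ρ ℝ) {f : ℝ → Matrix ι κ ℝ} {a b : ℝ}
    (hf : IntervalIntegrable f MeasureTheory.volume a b) :
    (∫ t in a..b, f t) * K = ∫ t in a..b, f t * K :=
  ((mulRightLinearMap ι ℝ K).toContinuousLinearMap.intervalIntegral_comp_comm hf).symm

theorem transpose_intervalIntegral (f : ℝ → Matrix ι κ ℝ) (a b : ℝ) :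
    (∫ t in a..b, f t)ᵀ = ∫ t in a..b, (f t)ᵀ :=
  (({ transposeLinearEquiv ι κ ℝ ℝ with norm_map' := norm_transpose } :
    Matrix ι κ ℝ →ₗᵢ[ℝ] Matrix κ ι ℝ).intervalIntegral_comp_comm f).symm

theorem summable_mul_prod_of_summable_norm {f g : ℕ → Matrix κ κ ℝ}
    (hf : Summable fun k => ‖f k‖) (hg : Summable fun k => ‖g k‖) :
    Summable fun p : ℕ × ℕ => f p.1 * g p.2 := by
  refine Summable.of_norm_bounded ((hf.mul_of_nonneg hg (fun _ => norm_nonneg _)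
    fun _ => norm_nonneg _).mul_left (Fintype.card κ : ℝ)) fun p => ?_
  simpa [mul_assoc] using norm_mul_le_card_mul (f p.1) (g p.2)

end Matrix

theorem HasDerivWithinAt.matrix_mul {ι κ ρ : Type*} [Fintype ι] [Fintype κ] [Fintype ρ]
    {f : ℝ → Matrix ι κ ℝ} {g : ℝ → Matrix κ ρ ℝ}
    {f' : Matrix ι κ ℝ} {g' : Matrix κ ρ ℝ} {s : Set ℝ} {x : ℝ}
    (hf : HasDerivWithinAt f f' s x) (hg : HasDerivWithinAt g g' s x) :
    HasDerivWithinAt (fun t => f t * g t) (f' * g x + f x * g') s x := by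
  have h := (Matrix.isBoundedBilinearMap_mul.hasFDerivAt (f x, g x)).comp_hasDerivWithinAt x
    (hf.prodMk hg)
  rw [Matrix.isBoundedBilinearMap_mul.deriv_apply, add_comm] at h
  exact h

theorem ContinuousOn.matrix_mul {α ι κ ρ : Type*} [TopologicalSpace α] [Fintype κ]
    {f : α → Matrix ι κ ℝ} {g : α → Matrix κ ρ ℝ} {s : Set α}
    (hf : ContinuousOn f s) (hg : ContinuousOn g s) : ContinuousOn (fun t => f t * g t) s :=
  (continuous_fst.matrix_mul continuous_snd).comp_continuousOn (hf.prodMk hg)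

theorem ContinuousOn.matrix_fromBlocks {α R l m n p : Type*} [TopologicalSpace α]
    [TopologicalSpace R] {s : Set α} {A : α → Matrix n l R} {B : α → Matrix n m R}
    {C : α → Matrix p l R} {D : α → Matrix p m R} (hA : ContinuousOn A s) (hB : ContinuousOn B s)
    (hC : ContinuousOn C s) (hD : ContinuousOn D s) :
    ContinuousOn (fun x => Matrix.fromBlocks (A x) (B x) (C x) (D x)) s := by
  rw [continuousOn_iff_continuous_domRestrict] at *
  exact hA.matrix_fromBlocks hB hC hD

section Primitive

variable {E : Type*} [NormedAddCommGroup E] [NormedSpace ℝ E] {f : ℝ → E} {a b : ℝ}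

theorem ContinuousOn.continuousOn_primitive_Icc (hf : ContinuousOn f (Icc a b)) :
    ContinuousOn (fun x => ∫ t in a..x, f t) (Icc a b) := by
  rcases le_total a b with hab | hab
  · rw [← uIcc_of_le hab] at hf ⊢
    exact intervalIntegral.continuousOn_primitive_interval
      (hf.integrableOn_compact isCompact_uIcc)
  · exact (subsingleton_Icc_of_ge hab).continuousOn _

theorem ContinuousOn.hasDerivWithinAt_primitive [CompleteSpace E] (hf : ContinuousOn f (Icc a b))
    {x : ℝ} (hx : x ∈ Ico a b) :
    HasDerivWithinAt (fun u => ∫ t in a..u, f t) (f x) (Ici x) x := by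
  have hmem : Icc a b ∈ 𝓝[>] x :=
    nhdsWithin_mono x Ioi_subset_Ici_self (Icc_mem_nhdsGE_of_mem hx)
  exact intervalIntegral.integral_hasDerivWithinAt_right
    ((hf.mono (Icc_subset_Icc le_rfl hx.2.le)).intervalIntegrable_of_Icc hx.1)
    ⟨Icc a b, hmem, hf.aestronglyMeasurable measurableSet_Icc⟩
    ((hf x (Ico_subset_Icc_self hx)).mono_of_mem_nhdsWithin hmem)

end Primitive

section LeftSeries

variable {σ : Type*} [Fintype σ] [DecidableEq σ] {X : ℝ → Matrix σ σ ℝ} {b x : ℝ}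

theorem continuousOn_lterm (hX : ContinuousOn X (Icc 0 b)) :
    ∀ k, ContinuousOn (lterm X k) (Icc 0 b)
  | 0 => continuousOn_const
  | k + 1 => (hX.matrix_mul (continuousOn_lterm hX k)).continuousOn_primitive_Icc

theorem integral_mul_pow_div_factorial (D x : ℝ) (k : ℕ) :
    ∫ t in (0:ℝ)..x, D * ((D * t) ^ k / k.factorial) =
      (D * x) ^ (k + 1) / (k + 1).factorial := by
  simp only [mul_pow, div_eq_mul_inv, ← mul_assoc]
  rw [intervalIntegral.integral_mul_const, intervalIntegral.integral_const_mul, integral_pow]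
  push_cast [Nat.factorial_succ]
  field_simp
  ring

theorem norm_lterm_le {C : ℝ} (hC : ∀ t ∈ Icc 0 b, ‖X t‖ ≤ C) :
    ∀ k, ∀ x ∈ Icc 0 b, ‖lterm X k x‖ ≤ (Fintype.card σ * C * x) ^ k / k.factorial
  | 0, x, _ => by simpa [lterm] using Matrix.norm_one_le
  | k + 1, x, hx => by
    set D := Fintype.card σ * C
    have hD : 0 ≤ D := by have := (norm_nonneg _).trans (hC x hx); positivity
    have hsub : Icc 0 x ⊆ Icc 0 b := Icc_subset_Icc le_rfl hx.2
    calc ‖∫ t in (0:ℝ)..x, X t * lterm X k t‖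
        ≤ ∫ t in (0:ℝ)..x, D * ((D * t) ^ k / k.factorial) := by
          refine intervalIntegral.norm_integral_le_of_norm_le hx.1
            (Filter.Eventually.of_forall fun t ht => ?_)
            (Continuous.intervalIntegrable (by fun_prop) _ _)
          have ht' : t ∈ Icc 0 b := hsub (Ioc_subset_Icc_self ht)
          calc ‖X t * lterm X k t‖ ≤ Fintype.card σ * ‖X t‖ * ‖lterm X k t‖ :=
                Matrix.norm_mul_le_card_mul _ _
            _ ≤ D * ((D * t) ^ k / k.factorial) :=
                mul_le_mul (mul_le_mul_of_nonneg_left (hC t ht') (Nat.cast_nonneg _))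
                  (norm_lterm_le hC k t ht') (norm_nonneg _) hD
      _ = (D * x) ^ (k + 1) / (k + 1).factorial := integral_mul_pow_div_factorial D x k

theorem summable_norm_lterm (hX : ContinuousOn X (Icc 0 b)) (hx : x ∈ Icc 0 b) :
    Summable (‖lterm X · x‖) := by
  obtain ⟨C, hC⟩ := isCompact_Icc.exists_bound_of_continuousOn hX
  exact .of_nonneg_of_le (fun _ => norm_nonneg _) (fun k => norm_lterm_le hC k x hx)
    (Real.summable_pow_div_factorial _)

noncomputable def ltermDeriv (X : ℝ → Matrix σ σ ℝ) : ℕ → ℝ → Matrix σ σ ℝ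
  | 0, _ => 0
  | k + 1, x => X x * lterm X k x

theorem hasDerivWithinAt_lterm (hX : ContinuousOn X (Icc 0 b)) (hx : x ∈ Ico 0 b) :
    ∀ k, HasDerivWithinAt (lterm X k) (ltermDeriv X k x) (Ici x) x
  | 0 => hasDerivWithinAt_const x _ 1
  | k + 1 => (hX.matrix_mul (continuousOn_lterm hX k)).hasDerivWithinAt_primitive hx

end LeftSeries

section RightSeries

variable {σ : Type*} [Fintype σ] [DecidableEq σ] {X : ℝ → Matrix σ σ ℝ} {b x : ℝ}

theorem continuousOn_rterm (hX : ContinuousOn X (Icc 0 b)) :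
    ∀ k, ContinuousOn (rterm X k) (Icc 0 b)
  | 0 => continuousOn_const
  | k + 1 => ((continuousOn_rterm hX k).matrix_mul hX).continuousOn_primitive_Icc

theorem rterm_eq_transpose_lterm_transpose (X : ℝ → Matrix σ σ ℝ) :
    ∀ k x, rterm X k x = (lterm (fun t => (X t)ᵀ) k x)ᵀ
  | 0, x => by simp [rterm, lterm]
  | k + 1, x => by
    simp only [rterm, lterm, Matrix.transpose_intervalIntegral, Matrix.transpose_mul,
      Matrix.transpose_transpose, rterm_eq_transpose_lterm_transpose X k]

theorem summable_norm_rterm (hX : ContinuousOn X (Icc 0 b)) (hx : x ∈ Icc 0 b) :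
    Summable (‖rterm X · x‖) := by
  simpa [rterm_eq_transpose_lterm_transpose, Matrix.norm_transpose] using
    summable_norm_lterm (X := fun t => (X t)ᵀ)
      ((continuous_id.matrix_transpose).comp_continuousOn hX) hx

noncomputable def rtermDeriv (X : ℝ → Matrix σ σ ℝ) : ℕ → ℝ → Matrix σ σ ℝ
  | 0, _ => 0
  | k + 1, x => rterm X k x * X x

theorem hasDerivWithinAt_rterm (hX : ContinuousOn X (Icc 0 b)) (hx : x ∈ Ico 0 b) :
    ∀ k, HasDerivWithinAt (rterm X k) (rtermDeriv X k x) (Ici x) x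
  | 0 => hasDerivWithinAt_const x _ 1
  | k + 1 => ((continuousOn_rterm hX k).matrix_mul hX).hasDerivWithinAt_primitive hx

end RightSeries

section Intertwining

variable {σ τ : Type*} [Fintype σ] [DecidableEq σ] [Fintype τ] [DecidableEq τ]
  {X : ℝ → Matrix σ σ ℝ} {Y : ℝ → Matrix τ τ ℝ} {b x : ℝ}

theorem mul_lterm_eq_lterm_mul (K : Matrix τ σ ℝ) (hX : ContinuousOn X (Icc 0 b))
    (hY : ContinuousOn Y (Icc 0 b)) (hK : ∀ t ∈ Icc 0 b, K * X t = Y t * K) :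
    ∀ k, ∀ x ∈ Icc 0 b, K * lterm X k x = lterm Y k x * K
  | 0, x, _ => by simp [lterm]
  | k + 1, x, hx => by
    have hsub : uIcc 0 x ⊆ Icc 0 b := by
      rw [uIcc_of_le hx.1]
      exact Icc_subset_Icc le_rfl hx.2
    calc K * ∫ t in (0:ℝ)..x, X t * lterm X k t
        = ∫ t in (0:ℝ)..x, K * (X t * lterm X k t) := Matrix.mul_intervalIntegral K
          (((hX.matrix_mul (continuousOn_lterm hX k)).mono hsub).intervalIntegrable)
      _ = ∫ t in (0:ℝ)..x, Y t * lterm Y k t * K :=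
          intervalIntegral.integral_congr fun t ht => by
          rw [← Matrix.mul_assoc, hK t (hsub ht), Matrix.mul_assoc,
            mul_lterm_eq_lterm_mul K hX hY hK k t (hsub ht), Matrix.mul_assoc]
      _ = (∫ t in (0:ℝ)..x, Y t * lterm Y k t) * K := (Matrix.intervalIntegral_mul K
          (((hY.matrix_mul (continuousOn_lterm hY k)).mono hsub).intervalIntegrable)).symm

theorem mul_ES_eq_ES_mul (K : Matrix τ σ ℝ) (hX : ContinuousOn X (Icc 0 b))
    (hY : ContinuousOn Y (Icc 0 b)) (hK : ∀ t ∈ Icc 0 b, K * X t = Y t * K) (hx : x ∈ Icc 0 b) :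
    K * ES X x = ES Y x * K := by
  rw [ES, ES, Matrix.mul_tsum K (summable_norm_lterm hX hx).of_norm,
    Matrix.tsum_mul K (summable_norm_lterm hY hx).of_norm]
  exact tsum_congr fun k => mul_lterm_eq_lterm_mul K hX hY hK k x hx

end Intertwining

section Inverse

open Finset

variable {σ : Type*} [Fintype σ] [DecidableEq σ] {X : ℝ → Matrix σ σ ℝ} {b x : ℝ}

theorem sum_antidiagonal_rterm_mul_lterm_neg_eq_zero (hX : ContinuousOn X (Icc 0 b)) (k : ℕ)
    (hx : x ∈ Icc 0 b) :
    ∑ p ∈ antidiagonal (k + 1), rterm X p.1 x * lterm (-X) p.2 x = 0 := by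
  have hX' : ContinuousOn (-X) (Icc 0 b) := hX.neg
  have hcont : ContinuousOn
      (fun y => ∑ p ∈ antidiagonal (k + 1), rterm X p.1 y * lterm (-X) p.2 y) (Icc 0 b) :=
    continuousOn_finsetSum _ fun p _ =>
      (continuousOn_rterm hX p.1).matrix_mul (continuousOn_lterm hX' p.2)
  have hderiv : ∀ y ∈ Ico 0 b, HasDerivWithinAt
      (fun y => ∑ p ∈ antidiagonal (k + 1), rterm X p.1 y * lterm (-X) p.2 y) 0 (Ici y) y := by
    intro y hy
    refine (HasDerivWithinAt.fun_sum fun (p : ℕ × ℕ) _ =>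
      (hasDerivWithinAt_rterm hX hy p.1).matrix_mul
        (hasDerivWithinAt_lterm hX' hy p.2)).congr_deriv ?_
    rw [sum_add_distrib, Nat.sum_antidiagonal_succ, Nat.sum_antidiagonal_succ']
    simp [rtermDeriv, ltermDeriv, Matrix.mul_assoc]
  rw [constant_of_has_deriv_right_zero hcont hderiv x hx]
  refine sum_eq_zero fun p hp => ?_
  rcases p with ⟨_ | i, _ | j⟩
  · simp at hp
  · simp [lterm]
  · simp [rterm]
  · simp [rterm]

theorem FS_mul_ES_neg (hX : ContinuousOn X (Icc 0 b)) (hx : x ∈ Icc 0 b) :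
    FS X x * ES (-X) x = 1 := by
  have hF := summable_norm_rterm hX hx
  have hE := summable_norm_lterm hX.neg hx
  have hFE := Matrix.summable_mul_prod_of_summable_norm hF hE
  have hF' : Summable (rterm X · x) := hF.of_norm
  rw [FS, ES, hF'.tsum_mul_tsum_eq_tsum_sum_antidiagonal hE.of_norm hFE, tsum_eq_single 0]
  · rw [Nat.antidiagonal_zero, sum_singleton]
    exact Matrix.one_mul _
  · intro k hk
    obtain ⟨k, rfl⟩ := Nat.exists_eq_succ_of_ne_zero hk
    exact sum_antidiagonal_rterm_mul_lterm_neg_eq_zero hX k hx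

end Inverse

theorem FS_mul_mul_ES_eq {σ τ : Type*} [Fintype σ] [DecidableEq σ] [Fintype τ] [DecidableEq τ]
    {X : ℝ → Matrix σ σ ℝ} {Y : ℝ → Matrix τ τ ℝ} {b x : ℝ} (K : Matrix τ σ ℝ)
    (hX : ContinuousOn X (Icc 0 b)) (hY : ContinuousOn Y (Icc 0 b))
    (hK : ∀ t ∈ Icc 0 b, K * X t = -Y t * K) (hx : x ∈ Icc 0 b) :
    FS Y x * K * ES X x = K := by
  rw [Matrix.mul_assoc, mul_ES_eq_ES_mul K hX hY.neg hK hx, ← Matrix.mul_assoc,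
    FS_mul_ES_neg hY hx, Matrix.one_mul]

namespace Matrix

variable {k l m n α : Type*} [Fintype m] [Fintype n] [DecidableEq m] [DecidableEq n]

def skewSwap (m n α : Type*) [DecidableEq m] [DecidableEq n] [Ring α] :
    Matrix (m ⊕ n) (n ⊕ m) α :=
  fromBlocks 0 (-1) 1 0

section Ring

variable [Ring α]

theorem skewSwap_mul_fromBlocks (A : Matrix n n α) (Q : Matrix n m α) (P : Matrix m n α)
    (B : Matrix m m α) :
    skewSwap m n α * fromBlocks A Q P B = -fromBlocks (-B) P Q (-A) * skewSwap m n α := by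
  simp [skewSwap, fromBlocks_multiply, fromBlocks_neg]

theorem fromCols_mul_skewSwap_mul_fromRows (U₁ : Matrix l m α) (U₂ : Matrix l n α)
    (W₁ : Matrix n k α) (W₂ : Matrix m k α) :
    fromCols U₁ U₂ * skewSwap m n α * fromRows W₁ W₂ = U₂ * W₁ - U₁ * W₂ := by
  simp [skewSwap, fromCols_mul_fromBlocks, fromCols_mul_fromRows]
  abel

end Ring

theorem mul_inv_eq_inv_mul_of_mul_eq [CommRing α] {U : Matrix n n α}
    {W : Matrix m m α} {U₁ W₁ : Matrix n m α}
    (hU : IsUnit U) (hW : IsUnit W) (h : U * W₁ = U₁ * W) : W₁ * W⁻¹ = U⁻¹ * U₁ := by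
  rw [isUnit_iff_isUnit_det] at hU hW
  calc W₁ * W⁻¹ = U⁻¹ * (U * W₁) * W⁻¹ := by rw [nonsing_inv_mul_cancel_left U W₁ hU]
    _ = U⁻¹ * U₁ := by rw [h, ← Matrix.mul_assoc, mul_nonsing_inv_cancel_right _ _ hW]

end Matrix

/-- the two Riccati representations agree:
`U₂·W₁ − U₁·W₂ = 0`, and where `W₂` and `U₂` are invertible, `W₁·W₂⁻¹ = U₂⁻¹·U₁`. -/
theorem riccati_representations_agree {n m : ℕ} (b : ℝ)
    (A : ℝ → Matrix (Fin n) (Fin n) ℝ) (B : ℝ → Matrix (Fin m) (Fin m) ℝ)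
    (P : ℝ → Matrix (Fin m) (Fin n) ℝ) (Q : ℝ → Matrix (Fin n) (Fin m) ℝ)
    (hA : ContinuousOn A (Set.Icc 0 b)) (hB : ContinuousOn B (Set.Icc 0 b))
    (hP : ContinuousOn P (Set.Icc 0 b)) (hQ : ContinuousOn Q (Set.Icc 0 b))
    (W₀ : Matrix (Fin n) (Fin m) ℝ)
    (M : ℝ → Matrix (Fin n ⊕ Fin m) (Fin n ⊕ Fin m) ℝ)
    (hM : ∀ x, M x = Matrix.fromBlocks (A x) (Q x) (P x) (B x))
    (N : ℝ → Matrix (Fin m ⊕ Fin n) (Fin m ⊕ Fin n) ℝ)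
    (hN : ∀ x, N x = Matrix.fromBlocks (-B x) (P x) (Q x) (-A x))
    (W₁ : ℝ → Matrix (Fin n) (Fin m) ℝ) (W₂ : ℝ → Matrix (Fin m) (Fin m) ℝ)
    (hW₁ : ∀ x, W₁ x =
      (ES M x * Matrix.fromRows W₀ (1 : Matrix (Fin m) (Fin m) ℝ)).submatrix Sum.inl id)
    (hW₂ : ∀ x, W₂ x =
      (ES M x * Matrix.fromRows W₀ (1 : Matrix (Fin m) (Fin m) ℝ)).submatrix Sum.inr id)
    (U₁ : ℝ → Matrix (Fin n) (Fin m) ℝ) (U₂ : ℝ → Matrix (Fin n) (Fin n) ℝ)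
    (hU₁ : ∀ x, U₁ x =
      (Matrix.fromCols W₀ (1 : Matrix (Fin n) (Fin n) ℝ) * FS N x).submatrix id Sum.inl)
    (hU₂ : ∀ x, U₂ x =
      (Matrix.fromCols W₀ (1 : Matrix (Fin n) (Fin n) ℝ) * FS N x).submatrix id Sum.inr) :
    ∀ x ∈ Set.Icc (0:ℝ) b,
      U₂ x * W₁ x - U₁ x * W₂ x = 0 ∧
      (IsUnit (W₂ x) → IsUnit (U₂ x) → W₁ x * (W₂ x)⁻¹ = (U₂ x)⁻¹ * U₁ x) := by
  intro x hx
  set J := Matrix.skewSwap (Fin m) (Fin n) ℝ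
  set L := Matrix.fromCols W₀ (1 : Matrix (Fin n) (Fin n) ℝ)
  set R := Matrix.fromRows W₀ (1 : Matrix (Fin m) (Fin m) ℝ)
  have hMc : ContinuousOn M (Icc 0 b) := (hA.matrix_fromBlocks hQ hP hB).congr fun t _ => hM t
  have hNc : ContinuousOn N (Icc 0 b) :=
    (hB.neg.matrix_fromBlocks hP hQ hA.neg).congr fun t _ => hN t
  have hJ : FS N x * J * ES M x = J := FS_mul_mul_ES_eq J hMc hNc (fun t _ => by
    rw [hM, hN, Matrix.skewSwap_mul_fromBlocks]) hx
  have hU : Matrix.fromCols (U₁ x) (U₂ x) = L * FS N x := by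
    rw [hU₁, hU₂]; exact Matrix.fromCols_toCols _
  have hW : Matrix.fromRows (W₁ x) (W₂ x) = ES M x * R := by
    rw [hW₁, hW₂]; exact Matrix.fromRows_toRows _
  have hzero : U₂ x * W₁ x - U₁ x * W₂ x = 0 := by
    rw [← Matrix.fromCols_mul_skewSwap_mul_fromRows, hU, hW]
    calc _ = L * (FS N x * J * ES M x) * R := by
          simp only [J, Matrix.mul_assoc]
      _ = 0 := by rw [hJ, Matrix.fromCols_mul_skewSwap_mul_fromRows, Matrix.one_mul,
          Matrix.mul_one, sub_self]
  exact ⟨hzero, fun hW hU => Matrix.mul_inv_eq_inv_mul_of_mul_eq hU hW (sub_eq_zero.1 hzero)⟩
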